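/- arXiv:1301.6635 — 4 statements merged into one kernel-verified Lean document; each statement's English description precedes it below -/
import Mathlib

section
/- Let (p,q) ∈ ℕ^m × ℕ^n and let r = bar q be the count vector of q. Then the number of binary matrices with margins (p,q) satisfies N(p,q) = Σ_{s ∈ C^r(p_1)} (r choose s) · N((p_2,...,p_m), q_s), where for each s ∈ C^r(p_1), q_s denotes any finite nonnegative integer vector whose count vector equals r ⊖ s (such a vector exists since r ⊖ s has nonnegative entries and finite support, and the value N((p_2,...,p_m), q_s) does not depend on the choice of q_s). -/
open scoped BigOperators

/-- `countVec q k` is the number of entries of `q` equal to `k + 1`; i.e. it represents the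
count vector `bar q = (bar q_1, bar q_2, ...)` in 0-based indexing (index `k` ↦ value `k+1`). -/
def countVec {n : ℕ} (q : Fin n → ℕ) (k : ℕ) : ℕ :=
  (Finset.univ.filter fun j => q j = k + 1).card

/-- `binN m n p q` is the number of `m × n` matrices with entries in `{0,1}` whose
`i`-th row sum is `p i` and whose `j`-th column sum is `q j`. -/
noncomputable def binN (m n : ℕ) (p : Fin m → ℕ) (q : Fin n → ℕ) : ℕ :=
  Nat.card {A : Fin m → Fin n → ℕ // (∀ i j, A i j ≤ 1) ∧
    (∀ i, ∑ j, A i j = p i) ∧ (∀ j, ∑ i, A i j = q j)}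

/-!
The first row of a binary matrix with margins `(p, q)` is the indicator of a set `S` of `p₁`
columns with nonzero sum, and the remaining rows form a binary matrix with margins
`((p₂, …, pₘ), q - 𝟙_S)`. The number of such matrices depends on the column sums only through
their count vector (permute the columns and discard the zero ones), and the count vector of
`q - 𝟙_S` is `r ⊖ s`, where `s k` counts the columns of `S` with sum `k + 1`. For a given `s`
there are `∏ₖ (r k).choose (s k)` such sets `S`: choose `s k` columns from each fiber
`{j | q j = k + 1}`.
-/

open Finset

section BinaryMatrices

variable {ι κ : Type*} [Fintype ι] [Fintype κ]

def IsBinaryWithMargins (p : ι → ℕ) (q : κ → ℕ) (A : ι → κ → ℕ) : Prop :=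
  (∀ i j, A i j ≤ 1) ∧ (∀ i, ∑ j, A i j = p i) ∧ (∀ j, ∑ i, A i j = q j)

theorem binN_eq_card {m n : ℕ} (p : Fin m → ℕ) (q : Fin n → ℕ) :
    binN m n p q = Nat.card {A // IsBinaryWithMargins p q A} := rfl

instance (p : ι → ℕ) (q : κ → ℕ) : Finite {A // IsBinaryWithMargins p q A} :=
  Finite.of_injective (fun A i j => (⟨A.1 i j, Nat.lt_succ_of_le (A.2.1 i j)⟩ : Fin 2))
    fun _ _ h => Subtype.ext <| funext₂ fun i j => congrArg Fin.val (congrFun₂ h i j)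

theorem isBinaryWithMargins_cons_iff {m : ℕ} (p : Fin (m + 1) → ℕ) (q : κ → ℕ) (x : κ → ℕ)
    (B : Fin m → κ → ℕ) :
    IsBinaryWithMargins p q (Fin.cons x B) ↔
      (∀ j, x j ≤ 1) ∧ ∑ j, x j = p 0 ∧ (∀ j, x j ≤ q j) ∧
        IsBinaryWithMargins (fun i : Fin m => p i.succ) (fun j => q j - x j) B := by
  simp only [IsBinaryWithMargins, Fin.forall_fin_succ, Fin.sum_univ_succ, Fin.cons_zero,
    Fin.cons_succ]
  have hcol : (∀ j, x j + ∑ i, B i j = q j) ↔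
      (∀ j, x j ≤ q j) ∧ ∀ j, ∑ i, B i j = q j - x j := by
    simp only [← forall_and]
    exact forall_congr' fun j => by omega
  rw [hcol]
  tauto

theorem sum_eq_card_filter_of_le_one {x : κ → ℕ} (hx : ∀ j, x j ≤ 1) :
    ∑ j, x j = #(univ.filter (x · = 1)) := by
  rw [card_filter]
  exact sum_congr rfl fun j _ => by have := hx j; split_ifs <;> omega

variable [DecidableEq κ]

theorem eq_indicator_of_le_one {x : κ → ℕ} (hx : ∀ j, x j ≤ 1) :
    x = fun j => if j ∈ univ.filter (x · = 1) then 1 else 0 := by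
  funext j
  have := hx j
  split_ifs with h <;> simp only [mem_filter, mem_univ, true_and] at h <;> omega

noncomputable def firstRowEquiv {m : ℕ} (p : Fin (m + 1) → ℕ) (q : κ → ℕ) :
    {A // IsBinaryWithMargins p q A} ≃
      Σ S : (univ.filter (q · ≠ 0)).powersetCard (p 0),
        {B // IsBinaryWithMargins (fun i : Fin m => p i.succ)
          (fun j => q j - if j ∈ (S : Finset κ) then 1 else 0) B} where
  toFun A :=
    have h := (isBinaryWithMargins_cons_iff p q (A.1 0) (Fin.tail A.1)).1
      (by rw [Fin.cons_self_tail]; exact A.2)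
    have hx := eq_indicator_of_le_one h.1
    ⟨⟨univ.filter (A.1 0 · = 1), mem_powersetCard.2 ⟨fun j hj => by
        simp only [mem_filter, mem_univ, true_and] at hj ⊢
        have := h.2.2.1 j
        omega, by
        rw [← sum_eq_card_filter_of_le_one h.1, h.2.1]⟩⟩,
      Fin.tail A.1, by have := h.2.2.2; rw [hx] at this; exact this⟩
  invFun S := ⟨Fin.cons (fun j => if j ∈ (S.1 : Finset κ) then 1 else 0) S.2.1, by
    obtain ⟨hsupp, hcard⟩ := mem_powersetCard.1 S.1.2
    refine (isBinaryWithMargins_cons_iff p q _ _).2 ⟨fun j => ?_, ?_, fun j => ?_, S.2.2⟩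
    · split_ifs <;> omega
    · rw [sum_boole]; simpa using hcard
    · split_ifs with hj
      · have := hsupp hj
        simp only [mem_filter, mem_univ, true_and] at this
        omega
      · omega⟩
  left_inv A := Subtype.ext <| by
    simp only
    rw [← eq_indicator_of_le_one (A.2.1 0), Fin.cons_self_tail]
  right_inv S := Sigma.subtype_ext (Subtype.ext <| by ext j; simp) rfl

end BinaryMatrices

theorem binN_succ {m n : ℕ} (p : Fin (m + 1) → ℕ) (q : Fin n → ℕ) :
    binN (m + 1) n p q = ∑ S ∈ (univ.filter (q · ≠ 0)).powersetCard (p 0),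
      binN m n (fun i => p i.succ) (fun j => q j - if j ∈ S then 1 else 0) := by
  rw [binN_eq_card, Nat.card_congr (firstRowEquiv p q), Nat.card_sigma]
  exact sum_coe_sort _ fun S => binN m n (fun i => p i.succ) fun j => q j - if j ∈ S then 1 else 0

section Columns

variable {ι κ κ' : Type*} [Fintype ι] [Fintype κ] [Fintype κ']

theorem card_isBinaryWithMargins_comp_equiv (e : κ ≃ κ') (p : ι → ℕ) (q : κ' → ℕ) :
    Nat.card {A // IsBinaryWithMargins p (q ∘ e) A} =
      Nat.card {A // IsBinaryWithMargins p q A} :=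
  Nat.card_congr <| Equiv.subtypeEquiv (Equiv.piCongrRight fun _ => e.arrowCongr (.refl ℕ))
    fun A => by
      simp [IsBinaryWithMargins, e.symm.forall_congr_left, Equiv.sum_comp]

theorem IsBinaryWithMargins.eq_zero {p : ι → ℕ} {q : κ → ℕ} {A : ι → κ → ℕ}
    (hA : IsBinaryWithMargins p q A) {j : κ} (hj : q j = 0) (i : ι) : A i j = 0 :=
  sum_eq_zero_iff.1 ((hA.2.2 j).trans hj) i (mem_univ i)

theorem sum_eq_sum_subtype_ne_zero {f q : κ → ℕ} (hf : ∀ j, q j = 0 → f j = 0) :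
    ∑ j, f j = ∑ j : {j // q j ≠ 0}, f j := by
  rw [← sum_filter_of_ne fun j _ hfj hq => hfj (hf j hq)]
  exact sum_subtype _ (by simp) f

def restrictSupportEquiv (p : ι → ℕ) (q : κ → ℕ) :
    {A // IsBinaryWithMargins p q A} ≃
      {A // IsBinaryWithMargins p (fun j : {j // q j ≠ 0} => q j) A} where
  toFun A := ⟨fun i j => A.1 i j, fun i j => A.2.1 i j, fun i =>
    (sum_eq_sum_subtype_ne_zero fun j hj => A.2.eq_zero hj i).symm.trans (A.2.2.1 i),
    fun j => A.2.2.2 j⟩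
  invFun B := ⟨fun i j => if h : q j = 0 then 0 else B.1 i ⟨j, h⟩, by
    refine ⟨fun i j => ?_, fun i => ?_, fun j => ?_⟩ <;> dsimp only
    · split_ifs
      exacts [zero_le_one, B.2.1 _ _]
    · rw [sum_eq_sum_subtype_ne_zero (q := q) fun j hj => dif_pos hj, ← B.2.2.1 i]
      exact sum_congr rfl fun j _ => dif_neg j.2
    · split_ifs with hj
      · simp [hj]
      · exact B.2.2.2 ⟨j, hj⟩⟩
  left_inv A := Subtype.ext <| funext₂ fun i j => by
    dsimp only
    split_ifs with hj
    exacts [(A.2.eq_zero hj i).symm, rfl]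
  right_inv B := Subtype.ext <| funext₂ fun i j => dif_neg j.2

theorem card_fiber_subtype_ne_zero (q : κ → ℕ) (c : ℕ) :
    Fintype.card {j : {j // q j ≠ 0} // q j = c} =
      if c = 0 then 0 else #(univ.filter (q · = c)) := by
  split_ifs with hc
  · exact Fintype.card_eq_zero_iff.2 ⟨fun j => j.1.2 (j.2.trans hc)⟩
  · rw [Fintype.card_congr (Equiv.subtypeSubtypeEquivSubtype (p := (q · ≠ 0)) (q := (q · = c))
      fun h => h ▸ hc), Fintype.card_subtype]

theorem exists_equiv_support_of_card_fiber_eq {q : κ → ℕ} {q' : κ' → ℕ}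
    (h : ∀ c ≠ 0, #(univ.filter (q · = c)) = #(univ.filter (q' · = c))) :
    ∃ e : {j // q j ≠ 0} ≃ {j // q' j ≠ 0}, ∀ j, q' (e j) = q j := by
  have hcard (c : ℕ) : Fintype.card {j : {j // q j ≠ 0} // q j = c} =
      Fintype.card {j : {j // q' j ≠ 0} // q' j = c} := by
    rw [card_fiber_subtype_ne_zero, card_fiber_subtype_ne_zero]
    split_ifs with hc
    exacts [rfl, h c hc]
  exact ⟨Equiv.ofFiberEquiv _, Equiv.ofFiberEquiv_map fun c => Fintype.equivOfCardEq (hcard c)⟩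

end Columns

theorem binN_eq_of_countVec_eq {m n n' : ℕ} (p : Fin m → ℕ) {q : Fin n → ℕ} {q' : Fin n' → ℕ}
    (h : ∀ k, countVec q k = countVec q' k) : binN m n p q = binN m n' p q' := by
  obtain ⟨e, he⟩ := exists_equiv_support_of_card_fiber_eq (q := q) (q' := q') fun c hc => by
    obtain ⟨k, rfl⟩ := Nat.exists_eq_succ_of_ne_zero hc
    exact h k
  have hq : (fun j : {j // q j ≠ 0} => q j) = (fun j : {j // q' j ≠ 0} => q' j) ∘ e :=
    funext fun j => (he j).symm
  rw [binN_eq_card, binN_eq_card, Nat.card_congr (restrictSupportEquiv p q),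
    Nat.card_congr (restrictSupportEquiv p q'), hq, card_isBinaryWithMargins_comp_equiv]

theorem Finset.card_filter_powerset_card_inter_eq {α ι : Type*} [DecidableEq α] (t : Finset ι)
    {F : ι → Finset α} (hF : (t : Set ι).PairwiseDisjoint F) (s : ι → ℕ) :
    #{S ∈ (t.biUnion F).powerset | ∀ i ∈ t, #(S ∩ F i) = s i} =
      ∏ i ∈ t, (#(F i)).choose (s i) := by
  classical
  set P := t.pi fun i => (F i).powersetCard (s i)
  have hP : ∀ f ∈ P, ∀ i (hi : i ∈ t), f i hi ⊆ F i ∧ #(f i hi) = s i :=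
    fun f hf i hi => mem_powersetCard.1 (mem_pi.1 hf i hi)
  have hinter : ∀ f ∈ P, ∀ i (hi : i ∈ t),
      (t.attach.biUnion fun j => f j.1 j.2) ∩ F i = f i hi := by
    intro f hf i hi
    ext a
    simp only [mem_inter, mem_biUnion, mem_attach, true_and, Subtype.exists]
    constructor
    · rintro ⟨⟨j, hj, ha⟩, haF⟩
      obtain rfl : j = i := by
        by_contra hji
        exact disjoint_left.1 (hF hj hi hji) ((hP f hf j hj).1 ha) haF
      exact ha
    · exact fun ha => ⟨⟨i, hi, ha⟩, (hP f hf i hi).1 ha⟩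
  have hcard : #P = ∏ i ∈ t, (#(F i)).choose (s i) := by
    simp only [P, card_pi, card_powersetCard]
  rw [← hcard]
  refine card_bij' (fun S _ i _ => S ∩ F i) (fun f _ => t.attach.biUnion fun j => f j.1 j.2)
    ?_ ?_ ?_ ?_
  · intro S hS
    simp only [mem_filter] at hS
    exact mem_pi.2 fun i hi => mem_powersetCard.2 ⟨inter_subset_right, hS.2 i hi⟩
  · intro f hf
    simp only [mem_filter, mem_powerset]
    refine ⟨biUnion_subset.2 fun j _ => (hP f hf j.1 j.2).1.trans (subset_biUnion_of_mem F j.2),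
      fun i hi => ?_⟩
    rw [hinter f hf i hi, (hP f hf i hi).2]
  · intro S hS
    simp only [mem_filter, mem_powerset] at hS
    ext a
    simp only [mem_biUnion, mem_attach, true_and, mem_inter, Subtype.exists]
    constructor
    · rintro ⟨i, -, ha, -⟩
      exact ha
    · intro ha
      obtain ⟨i, hi, haF⟩ := mem_biUnion.1 (hS.1 ha)
      exact ⟨i, hi, ha, haF⟩
  · intro f hf
    funext i hi
    exact hinter f hf i hi

section FiberCounts

variable {n : ℕ} (q : Fin n → ℕ)

def fiberCounts (S : Finset (Fin n)) (k : ℕ) : ℕ := #{j ∈ S | q j = k + 1}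

theorem fiberCounts_le_countVec (S : Finset (Fin n)) (k : ℕ) :
    fiberCounts q S k ≤ countVec q k :=
  card_le_card (filter_subset_filter _ (subset_univ S))

theorem countVec_eq_zero_of_sup_le {k : ℕ} (hk : univ.sup q ≤ k) : countVec q k = 0 :=
  card_eq_zero.2 <| filter_eq_empty_iff.2 fun j _ hj => by
    have := le_sup (f := q) (mem_univ j)
    omega

theorem fiberCounts_eq_zero_of_sup_le (S : Finset (Fin n)) {k : ℕ} (hk : univ.sup q ≤ k) :
    fiberCounts q S k = 0 :=
  Nat.eq_zero_of_le_zero <| countVec_eq_zero_of_sup_le q hk ▸ fiberCounts_le_countVec q S k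

theorem pairwiseDisjoint_filter_eq_succ (T : Finset (Fin n)) (s : Set ℕ) :
    s.PairwiseDisjoint fun k => T.filter (q · = k + 1) :=
  fun _ _ _ _ hkl => disjoint_filter.2 fun _ _ h h' => hkl (by omega)

theorem filter_ne_zero_eq_biUnion (T : Finset (Fin n)) :
    T.filter (q · ≠ 0) = (range (univ.sup q)).biUnion fun k => T.filter (q · = k + 1) := by
  ext j
  have := le_sup (f := q) (mem_univ j)
  simp only [mem_filter, mem_biUnion, mem_range]
  exact ⟨fun hj => ⟨q j - 1, by omega, hj.1, by omega⟩, fun ⟨k, _, hj, hk⟩ => ⟨hj, by omega⟩⟩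

theorem support_fiberCounts_subset (S : Finset (Fin n)) :
    Function.support (fiberCounts q S) ⊆ range (univ.sup q) := fun k hk => by
  by_contra h
  exact hk (fiberCounts_eq_zero_of_sup_le q S (by simpa using h))

theorem card_eq_finsum_fiberCounts {S : Finset (Fin n)} (hS : S ⊆ univ.filter (q · ≠ 0)) :
    #S = ∑ᶠ k, fiberCounts q S k :=
  calc #S = #(S.filter (q · ≠ 0)) := by
        rw [filter_true_of_mem fun j hj => (mem_filter.1 (hS hj)).2]
    _ = ∑ k ∈ range (univ.sup q), fiberCounts q S k := by
      rw [filter_ne_zero_eq_biUnion, card_biUnion (pairwiseDisjoint_filter_eq_succ q _ _)]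
      rfl
    _ = ∑ᶠ k, fiberCounts q S k :=
      (finsum_eq_sum_of_support_subset _ (support_fiberCounts_subset q S)).symm

open Classical in
theorem card_filter_fiberCounts_eq {s : ℕ → ℕ} (hs : ∀ k, s k ≤ countVec q k) :
    #{S ∈ (univ.filter (q · ≠ 0)).powerset | fiberCounts q S = s} =
      ∏ᶠ k, (countVec q k).choose (s k) := by
  have hs_zero {k : ℕ} (hk : univ.sup q ≤ k) : s k = 0 :=
    Nat.eq_zero_of_le_zero (countVec_eq_zero_of_sup_le q hk ▸ hs k)
  rw [finprod_eq_prod_of_mulSupport_subset (s := range (univ.sup q)) _ fun k hk => by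
      by_contra h
      have hk' : univ.sup q ≤ k := by simpa using h
      exact hk (show (countVec q k).choose (s k) = 1 by
        rw [countVec_eq_zero_of_sup_le q hk', hs_zero hk', Nat.choose_self]),
    filter_ne_zero_eq_biUnion]
  unfold countVec
  rw [← card_filter_powerset_card_inter_eq _ (pairwiseDisjoint_filter_eq_succ q _ _)]
  congr 1
  refine filter_congr fun S _ => ?_
  simp only [inter_filter, inter_univ]
  refine ⟨fun h k _ => congrFun h k, fun h => funext fun k => ?_⟩
  by_cases hk : k < univ.sup q
  · exact h k (mem_range.2 hk)
  · rw [fiberCounts_eq_zero_of_sup_le q S (not_lt.1 hk), hs_zero (not_lt.1 hk)]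

theorem countVec_sub_indicator (S : Finset (Fin n)) (k : ℕ) :
    (countVec (fun j => q j - if j ∈ S then 1 else 0) k : ℤ) =
      countVec q k - fiberCounts q S k + fiberCounts q S (k + 1) := by
  have h : countVec (fun j => q j - if j ∈ S then 1 else 0) k + fiberCounts q S k =
      countVec q k + fiberCounts q S (k + 1) := by
    unfold countVec fiberCounts
    rw [← card_union_of_disjoint, ← card_union_of_disjoint]
    · congr 1
      ext j
      by_cases hj : j ∈ S <;>
        simp only [mem_union, mem_filter, mem_univ, hj, if_true, if_false, tsub_zero, true_and,
          false_and, or_false]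
      omega
    all_goals
      refine disjoint_left.2 fun j hj hj' => ?_
      by_cases hjS : j ∈ S <;> simp_all
  omega

theorem fiberCounts_mem_of_mem_powersetCard {S : Finset (Fin n)} {c : ℕ}
    (hS : S ∈ (univ.filter (q · ≠ 0)).powersetCard c) :
    (∀ k, fiberCounts q S k ≤ countVec q k) ∧ ∑ᶠ k, fiberCounts q S k = c := by
  obtain ⟨hsub, hcard⟩ := mem_powersetCard.1 hS
  exact ⟨fiberCounts_le_countVec q S, (card_eq_finsum_fiberCounts q hsub).symm.trans hcard⟩

open Classical in
theorem card_filter_powersetCard_fiberCounts_eq {s : ℕ → ℕ} {c : ℕ}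
    (hs : ∀ k, s k ≤ countVec q k) (hsum : ∑ᶠ k, s k = c) :
    #{S ∈ (univ.filter (q · ≠ 0)).powersetCard c | fiberCounts q S = s} =
      ∏ᶠ k, (countVec q k).choose (s k) := by
  rw [← card_filter_fiberCounts_eq q hs]
  congr 1
  ext S
  simp only [mem_filter, mem_powersetCard, mem_powerset]
  refine ⟨fun h => ⟨h.1.1, h.2⟩, fun h => ⟨⟨h.1, ?_⟩, h.2⟩⟩
  rw [card_eq_finsum_fiberCounts q h.1, h.2, hsum]

open Classical in
theorem coe_image_fiberCounts_powersetCard (c : ℕ) :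
    ↑(((univ.filter (q · ≠ 0)).powersetCard c).image (fiberCounts q)) =
      {s : ℕ → ℕ | (∀ k, s k ≤ countVec q k) ∧ ∑ᶠ k, s k = c} := by
  ext s
  simp only [coe_image, Set.mem_image, mem_coe, Set.mem_ofPred_eq]
  constructor
  · rintro ⟨S, hS, rfl⟩
    exact fiberCounts_mem_of_mem_powersetCard q hS
  · rintro ⟨hs, hsum⟩
    obtain ⟨S, hS⟩ := card_pos.1 <| Nat.pos_of_ne_zero <|
      (card_filter_powersetCard_fiberCounts_eq q hs hsum).trans_ne <|
        finprod_ne_zero fun k => (Nat.choose_pos (hs k)).ne'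
    exact ⟨S, (mem_filter.1 hS).1, (mem_filter.1 hS).2⟩

end FiberCounts

/-- Recursion for the number of binary matrices with margins `(p, q)`:
`N(p,q) = Σ_{s ∈ C^r(p_1)} (r choose s) · N((p_2,...,p_m), q_s)` where `r = bar q` and for each
`s`, `q_s` (here `qs s`, of length `ns s`) is any vector whose count vector is `r ⊖ s`.
Sequences in `ℕ^∞` are 0-based here: index `k` stands for position `k+1`. -/
theorem stmt0 (m n : ℕ) (p : Fin (m + 1) → ℕ) (q : Fin n → ℕ)
    (r : ℕ → ℕ) (hr : ∀ k, r k = countVec q k)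
    (ns : (ℕ → ℕ) → ℕ) (qs : ∀ s : ℕ → ℕ, Fin (ns s) → ℕ)
    (hqs : ∀ s : ℕ → ℕ, (∀ k, s k ≤ r k) → (∑ᶠ k, s k) = p 0 →
      ∀ k, (countVec (qs s) k : ℤ) = (r k : ℤ) - s k + s (k + 1)) :
    binN (m + 1) n p q =
      ∑ᶠ s ∈ {s : ℕ → ℕ | (∀ k, s k ≤ r k) ∧ (∑ᶠ k, s k) = p 0},
        (∏ᶠ k, (r k).choose (s k)) * binN m (ns s) (fun i => p i.succ) (qs s) := by
  classical
  obtain rfl : r = countVec q := funext hr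
  have hterm : ∀ S ∈ (univ.filter (q · ≠ 0)).powersetCard (p 0),
      binN m n (fun i => p i.succ) (fun j => q j - if j ∈ S then 1 else 0) =
        binN m (ns (fiberCounts q S)) (fun i => p i.succ) (qs (fiberCounts q S)) := fun S hS => by
    obtain ⟨hle, hsum⟩ := fiberCounts_mem_of_mem_powersetCard q hS
    refine binN_eq_of_countVec_eq _ fun k => ?_
    have := hqs _ hle hsum k
    have := countVec_sub_indicator q S k
    omega
  rw [binN_succ, sum_congr rfl hterm, sum_comp (fun s => binN m (ns s) _ (qs s)),
    ← coe_image_fiberCounts_powersetCard, finsum_mem_coe_finset]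
  refine sum_congr rfl fun s hs => ?_
  obtain ⟨S, hS, rfl⟩ := mem_image.1 hs
  obtain ⟨hle, hsum⟩ := fiberCounts_mem_of_mem_powersetCard q hS
  rw [smul_eq_mul, card_filter_powersetCard_fiberCounts_eq q hle hsum]
end

section
/- Let (p,q) ∈ ℕ^m × ℕ^n and let r = bar q be the count vector of q. Then the number of ℕ-valued matrices with margins (p,q) satisfies M(p,q) = Σ_s (r + Ls choose s) · M((p_2,...,p_m), q_s), where the sum ranges over all s ∈ ℕ^∞ (finitely supported) with Σ_i s_i = p_1 and s ≤ r + Ls componentwise, and for each such s, q_s denotes any finite nonnegative integer vector whose count vector equals r ⊖ s (such a vector exists since s ≤ r + Ls makes r ⊖ s nonnegative with finite support, and the value M((p_2,...,p_m), q_s) does not depend on the choice of q_s). -/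
open scoped BigOperators

/-- `natM m n p q` is the number of `m × n` matrices with entries in `ℕ` whose
`i`-th row sum is `p i` and whose `j`-th column sum is `q j`. -/
noncomputable def natM (m n : ℕ) (p : Fin m → ℕ) (q : Fin n → ℕ) : ℕ :=
  Nat.card {A : Fin m → Fin n → ℕ //
    (∀ i, ∑ j, A i j = p i) ∧ (∀ j, ∑ i, A i j = q j)}

/-- the level sets of the statistic -/
def AVMstatSet {n : ℕ} (q a : Fin n → ℕ) (k : ℕ) : Finset (Fin n) :=
  Finset.univ.filter fun j => k + 1 ≤ q j ∧ q j ≤ a j + k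

def AVMstat {n : ℕ} (q a : Fin n → ℕ) (k : ℕ) : ℕ := (AVMstatSet q a k).card

lemma AVMfinite_le {n : ℕ} (q : Fin n → ℕ) (P : (Fin n → ℕ) → Prop) :
    Finite {a : Fin n → ℕ // (∀ j, a j ≤ q j) ∧ P a} := by
  apply Finite.of_injective
    (fun a => (fun j => (⟨a.1 j, Nat.lt_succ_of_le (a.2.1 j)⟩ : Fin (q j + 1)) : ∀ j, Fin (q j + 1)))
  intro a b hab
  apply Subtype.ext; funext j
  exact congrArg Fin.val (congrFun hab j)

lemma AVMfinite_mat {m n : ℕ} (p : Fin m → ℕ) (q : Fin n → ℕ) :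
    Finite {A : Fin m → Fin n → ℕ //
      (∀ i, ∑ j, A i j = p i) ∧ (∀ j, ∑ i, A i j = q j)} := by
  have hb : ∀ (A : {A : Fin m → Fin n → ℕ //
      (∀ i, ∑ j, A i j = p i) ∧ (∀ j, ∑ i, A i j = q j)}) i j, A.1 i j ≤ p i := by
    intro A i j
    calc A.1 i j ≤ ∑ j', A.1 i j' :=
          Finset.single_le_sum (fun _ _ => Nat.zero_le _) (Finset.mem_univ j)
      _ = p i := A.2.1 i
  apply Finite.of_injective
    (fun A => (fun i j => (⟨A.1 i j, Nat.lt_succ_of_le (hb A i j)⟩ : Fin (p i + 1)) :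
      ∀ i, Fin n → Fin (p i + 1)))
  intro A B hab
  apply Subtype.ext; funext i j
  exact congrArg Fin.val (congrFun (congrFun hab i) j)

lemma AVMsum_stat {n N : ℕ} (q a : Fin n → ℕ) (hq : ∀ j, q j ≤ N) (ha : ∀ j, a j ≤ q j) :
    ∑ k ∈ Finset.range N, AVMstat q a k = ∑ j, a j := by
  have h1 : ∀ k, AVMstat q a k = ∑ j, if k + 1 ≤ q j ∧ q j ≤ a j + k then 1 else 0 := by
    intro k; rw [AVMstat, AVMstatSet, Finset.card_filter]
  calc ∑ k ∈ Finset.range N, AVMstat q a k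
      = ∑ k ∈ Finset.range N, ∑ j, if k + 1 ≤ q j ∧ q j ≤ a j + k then 1 else 0 := by
        exact Finset.sum_congr rfl fun k _ => h1 k
    _ = ∑ j, ∑ k ∈ Finset.range N, if k + 1 ≤ q j ∧ q j ≤ a j + k then 1 else 0 :=
        Finset.sum_comm
    _ = ∑ j, a j := by
        refine Finset.sum_congr rfl fun j _ => ?_
        rw [← Finset.card_filter]
        have : (Finset.range N).filter (fun k => k + 1 ≤ q j ∧ q j ≤ a j + k)
            = Finset.Ico (q j - a j) (q j) := by
          ext k
          simp only [Finset.mem_filter, Finset.mem_range, Finset.mem_Ico]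
          have := hq j; have := ha j; omega
        rw [this, Nat.card_Ico]
        have := ha j; omega

lemma AVMstat_chain {n : ℕ} (q a : Fin n → ℕ) (k : ℕ) :
    AVMstat q a k ≤ countVec q k + AVMstat q a (k + 1) := by
  have hsub : AVMstatSet q a k ⊆
      (Finset.univ.filter fun j => q j = k + 1) ∪ AVMstatSet q a (k + 1) := by
    intro j hj
    simp only [AVMstatSet, Finset.mem_filter, Finset.mem_union, Finset.mem_univ, true_and] at *
    omega
  calc AVMstat q a k ≤ ((Finset.univ.filter fun j => q j = k + 1) ∪ AVMstatSet q a (k + 1)).card :=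
        Finset.card_le_card hsub
    _ ≤ countVec q k + AVMstat q a (k + 1) := Finset.card_union_le _ _

lemma AVMstat_vanish {n N : ℕ} (q a : Fin n → ℕ) (hq : ∀ j, q j ≤ N) (k : ℕ) (hk : N ≤ k) :
    AVMstat q a k = 0 := by
  rw [AVMstat, Finset.card_eq_zero]
  ext j
  simp only [AVMstatSet, Finset.mem_filter, Finset.mem_univ, true_and, Finset.notMem_empty,
    iff_false]
  have := hq j; omega

lemma AVMcountVec_sub {n : ℕ} (q a : Fin n → ℕ) (ha : ∀ j, a j ≤ q j) (k : ℕ) :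
    (countVec (fun j => q j - a j) k : ℤ)
      = (countVec q k : ℤ) - AVMstat q a k + AVMstat q a (k + 1) := by
  classical
  set u : ℕ → ℕ := fun k => (Finset.univ.filter fun j => k + 1 ≤ q j).card with hu
  set v : ℕ → ℕ := fun k => (Finset.univ.filter fun j => k + 1 ≤ q j - a j).card with hv
  have hA : ∀ t, countVec (fun j => q j - a j) t + v (t + 1) = v t := by
    intro t
    have hsub : (Finset.univ.filter fun j => t + 1 + 1 ≤ q j - a j)
        ⊆ (Finset.univ.filter fun j => t + 1 ≤ q j - a j) := by
      intro j hj; simp only [Finset.mem_filter, Finset.mem_univ, true_and] at *; omega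
    have heq : (Finset.univ.filter fun j => (q j - a j) = t + 1)
        = (Finset.univ.filter fun j => t + 1 ≤ q j - a j)
          \ (Finset.univ.filter fun j => t + 1 + 1 ≤ q j - a j) := by
      ext j
      simp only [Finset.mem_filter, Finset.mem_univ, true_and, Finset.mem_sdiff]
      omega
    have := Finset.card_sdiff_add_card_eq_card hsub
    rw [countVec, heq, hv]
    simp only at this ⊢
    omega
  have hB : ∀ t, countVec q t + u (t + 1) = u t := by
    intro t
    have hsub : (Finset.univ.filter fun j => t + 1 + 1 ≤ q j)
        ⊆ (Finset.univ.filter fun j => t + 1 ≤ q j) := by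
      intro j hj; simp only [Finset.mem_filter, Finset.mem_univ, true_and] at *; omega
    have heq : (Finset.univ.filter fun j => q j = t + 1)
        = (Finset.univ.filter fun j => t + 1 ≤ q j)
          \ (Finset.univ.filter fun j => t + 1 + 1 ≤ q j) := by
      ext j
      simp only [Finset.mem_filter, Finset.mem_univ, true_and, Finset.mem_sdiff]
      omega
    have := Finset.card_sdiff_add_card_eq_card hsub
    rw [countVec, heq, hu]
    simp only at this ⊢
    omega
  have hC : ∀ t, AVMstat q a t + v t = u t := by
    intro t
    have hsub : AVMstatSet q a t ⊆ (Finset.univ.filter fun j => t + 1 ≤ q j) := by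
      intro j hj
      simp only [AVMstatSet, Finset.mem_filter, Finset.mem_univ, true_and] at *
      omega
    have heq : (Finset.univ.filter fun j => t + 1 ≤ q j - a j)
        = (Finset.univ.filter fun j => t + 1 ≤ q j) \ AVMstatSet q a t := by
      ext j
      simp only [AVMstatSet, Finset.mem_filter, Finset.mem_univ, true_and, Finset.mem_sdiff]
      have := ha j; omega
    have := Finset.card_sdiff_add_card_eq_card hsub
    rw [AVMstat, hv, hu]
    simp only [heq] at *
    omega
  have h1 := hA k
  have h2 := hB k
  have h3 := hC k
  have h4 := hC (k + 1)
  omega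

section B
variable {m n n' : ℕ}

lemma AVMcol_zero {m n : ℕ} {p : Fin m → ℕ} {q : Fin n → ℕ}
    (A : {A : Fin m → Fin n → ℕ // (∀ i, ∑ j, A i j = p i) ∧ (∀ j, ∑ i, A i j = q j)})
    {j : Fin n} (hj : q j = 0) (i : Fin m) : A.1 i j = 0 := by
  have h := A.2.2 j
  rw [hj] at h
  exact (Finset.sum_eq_zero_iff.mp h) i (Finset.mem_univ i)

lemma AVMnatM_congr {m n n' : ℕ} (p : Fin m → ℕ) (q : Fin n → ℕ) (q' : Fin n' → ℕ)
    (h : ∀ k, countVec q k = countVec q' k) : natM m n p q = natM m n' p q' := by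
  classical
  -- fiberwise card equality
  have hcard : ∀ (n₀ : ℕ) (q₀ : Fin n₀ → ℕ) (c : ℕ),
      Fintype.card {x : {j : Fin n₀ // q₀ j ≠ 0} // q₀ x.1 = c}
        = match c with | 0 => 0 | k + 1 => countVec q₀ k := by
    intro n₀ q₀ c
    have e := Fintype.card_congr
      (Equiv.subtypeSubtypeEquivSubtypeInter (fun j : Fin n₀ => q₀ j ≠ 0) (fun j => q₀ j = c))
    rw [e]
    match c with
    | 0 =>
      simp only
      rw [Fintype.card_eq_zero_iff]
      exact ⟨fun x => x.2.1 x.2.2⟩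
    | k + 1 =>
      simp only
      rw [Fintype.card_subtype, countVec]
      congr 1
      ext j
      simp only [Finset.mem_filter, Finset.mem_univ, true_and]
      omega
  have hcc : ∀ c, Fintype.card {x : {j : Fin n // q j ≠ 0} // q x.1 = c}
      = Fintype.card {x : {j : Fin n' // q' j ≠ 0} // q' x.1 = c} := by
    intro c
    rw [hcard n q c, hcard n' q' c]
    match c with
    | 0 => rfl
    | k + 1 => exact h k
  obtain ⟨E, hE⟩ : ∃ E : {j : Fin n // q j ≠ 0} ≃ {j' : Fin n' // q' j' ≠ 0},
      ∀ x, q' (E x).1 = q x.1 :=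
    ⟨Equiv.ofFiberEquiv (f := fun x => q x.1) (g := fun y => q' y.1)
      (fun c => Fintype.equivOfCardEq (hcc c)), fun x =>
      Equiv.ofFiberEquiv_map (f := fun x : {j : Fin n // q j ≠ 0} => q x.1)
        (g := fun y : {j' : Fin n' // q' j' ≠ 0} => q' y.1)
        (fun c => Fintype.equivOfCardEq (hcc c)) x⟩
  have hE' : ∀ y, q (E.symm y).1 = q' y.1 := by
    intro y
    have := hE (E.symm y)
    rw [E.apply_symm_apply] at this
    exact this.symm
  -- the two maps
  let Φ : {A : Fin m → Fin n → ℕ // (∀ i, ∑ j, A i j = p i) ∧ (∀ j, ∑ i, A i j = q j)} →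
      (Fin m → Fin n' → ℕ) := fun A i j' =>
    if hj : q' j' = 0 then 0 else A.1 i (E.symm ⟨j', hj⟩).1
  let Ψ : {A : Fin m → Fin n' → ℕ // (∀ i, ∑ j, A i j = p i) ∧ (∀ j, ∑ i, A i j = q' j)} →
      (Fin m → Fin n → ℕ) := fun A i j =>
    if hj : q j = 0 then 0 else A.1 i (E ⟨j, hj⟩).1
  have hΦrow : ∀ A i, ∑ j', Φ A i j' = p i := by
    intro A i
    have h1 : ∑ j' ∈ Finset.univ.filter (fun j' => q' j' ≠ 0), Φ A i j' = ∑ j', Φ A i j' :=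
      Finset.sum_filter_of_ne (by
        intro j' _ hne
        by_contra hq0
        apply hne
        show (if hj : q' j' = 0 then 0 else _) = 0
        exact dif_pos hq0)
    have h2 : ∑ j' ∈ Finset.univ.filter (fun j' => q' j' ≠ 0), Φ A i j'
        = ∑ y : {j' : Fin n' // q' j' ≠ 0}, Φ A i y.1 :=
      (Finset.sum_subtype _ (by simp) _)
    have h3 : ∀ y : {j' : Fin n' // q' j' ≠ 0}, Φ A i y.1 = A.1 i (E.symm y).1 := by
      intro y
      simp only [Φ, dif_neg y.2]
    have h4 : ∑ y : {j' : Fin n' // q' j' ≠ 0}, A.1 i (E.symm y).1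
        = ∑ x : {j : Fin n // q j ≠ 0}, A.1 i x.1 :=
      E.symm.sum_comp (fun x => A.1 i x.1)
    have h5 : ∑ x : {j : Fin n // q j ≠ 0}, A.1 i x.1
        = ∑ j ∈ Finset.univ.filter (fun j => q j ≠ 0), A.1 i j :=
      (Finset.sum_subtype _ (by simp) _).symm
    have h6 : ∑ j ∈ Finset.univ.filter (fun j => q j ≠ 0), A.1 i j = ∑ j, A.1 i j :=
      Finset.sum_filter_of_ne (by
        intro j _ hne
        by_contra hq0
        exact hne (AVMcol_zero A hq0 i))
    rw [← h1, h2]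
    simp only [h3]
    rw [h4, h5, h6, A.2.1 i]
  have hΦcol : ∀ A j', ∑ i, Φ A i j' = q' j' := by
    intro A j'
    by_cases hj : q' j' = 0
    · simp only [Φ, dif_pos hj, Finset.sum_const_zero, hj]
    · simp only [Φ, dif_neg hj]
      rw [A.2.2 _, hE']
  have hΨrow : ∀ B i, ∑ j, Ψ B i j = p i := by
    intro B i
    have h1 : ∑ j ∈ Finset.univ.filter (fun j => q j ≠ 0), Ψ B i j = ∑ j, Ψ B i j :=
      Finset.sum_filter_of_ne (by
        intro j _ hne
        by_contra hq0
        apply hne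
        show (if hj : q j = 0 then 0 else _) = 0
        exact dif_pos hq0)
    have h2 : ∑ j ∈ Finset.univ.filter (fun j => q j ≠ 0), Ψ B i j
        = ∑ x : {j : Fin n // q j ≠ 0}, Ψ B i x.1 :=
      (Finset.sum_subtype _ (by simp) _)
    have h3 : ∀ x : {j : Fin n // q j ≠ 0}, Ψ B i x.1 = B.1 i (E x).1 := by
      intro x
      simp only [Ψ, dif_neg x.2]
    have h4 : ∑ x : {j : Fin n // q j ≠ 0}, B.1 i (E x).1
        = ∑ y : {j' : Fin n' // q' j' ≠ 0}, B.1 i y.1 :=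
      E.sum_comp (fun y => B.1 i y.1)
    have h5 : ∑ y : {j' : Fin n' // q' j' ≠ 0}, B.1 i y.1
        = ∑ j' ∈ Finset.univ.filter (fun j' => q' j' ≠ 0), B.1 i j' :=
      (Finset.sum_subtype _ (by simp) _).symm
    have h6 : ∑ j' ∈ Finset.univ.filter (fun j' => q' j' ≠ 0), B.1 i j' = ∑ j', B.1 i j' :=
      Finset.sum_filter_of_ne (by
        intro j' _ hne
        by_contra hq0
        exact hne (AVMcol_zero B hq0 i))
    rw [← h1, h2]
    simp only [h3]
    rw [h4, h5, h6, B.2.1 i]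
  have hΨcol : ∀ B j, ∑ i, Ψ B i j = q j := by
    intro B j
    by_cases hj : q j = 0
    · simp only [Ψ, dif_pos hj, Finset.sum_const_zero, hj]
    · simp only [Ψ, dif_neg hj]
      rw [B.2.2 _, hE]
  rw [natM, natM]
  apply Nat.card_congr
  refine ⟨fun A => ⟨Φ A, fun i => hΦrow A i, fun j' => hΦcol A j'⟩,
    fun B => ⟨Ψ B, fun i => hΨrow B i, fun j => hΨcol B j⟩, ?_, ?_⟩
  · intro A
    apply Subtype.ext
    funext i j
    show Ψ _ i j = A.1 i j
    by_cases hj : q j = 0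
    · simp only [Ψ, dif_pos hj]
      exact (AVMcol_zero A hj i).symm
    · simp only [Ψ, dif_neg hj, Φ]
      have h2 : q' (E ⟨j, hj⟩).1 ≠ 0 := (E ⟨j, hj⟩).2
      rw [dif_neg h2]
      have h3 : (⟨(E ⟨j, hj⟩).1, h2⟩ : {j' // q' j' ≠ 0}) = E ⟨j, hj⟩ := rfl
      rw [h3, E.symm_apply_apply]
  · intro B
    apply Subtype.ext
    funext i j'
    show Φ _ i j' = B.1 i j'
    by_cases hj : q' j' = 0
    · simp only [Φ, dif_pos hj]
      exact (AVMcol_zero B hj i).symm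
    · simp only [Φ, dif_neg hj, Ψ]
      have h2 : q (E.symm ⟨j', hj⟩).1 ≠ 0 := (E.symm ⟨j', hj⟩).2
      rw [dif_neg h2]
      have h3 : (⟨(E.symm ⟨j', hj⟩).1, h2⟩ : {j // q j ≠ 0}) = E.symm ⟨j', hj⟩ := rfl
      rw [h3, E.apply_symm_apply]
end B

lemma AVMnatM_succ {m n : ℕ} (p : Fin (m + 1) → ℕ) (q : Fin n → ℕ) :
    natM (m + 1) n p q
      = ∑ᶠ a : {a : Fin n → ℕ // (∀ j, a j ≤ q j) ∧ ∑ j, a j = p 0},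
          natM m n (fun i => p i.succ) (fun j => q j - a.1 j) := by
  classical
  letI : Fintype {a : Fin n → ℕ // (∀ j, a j ≤ q j) ∧ ∑ j, a j = p 0} :=
    @Fintype.ofFinite _ (AVMfinite_le q _)
  letI FB : ∀ a : {a : Fin n → ℕ // (∀ j, a j ≤ q j) ∧ ∑ j, a j = p 0},
      Fintype {B : Fin m → Fin n → ℕ //
        (∀ i, ∑ j, B i j = p i.succ) ∧ (∀ j, ∑ i, B i j = q j - a.1 j)} :=
    fun a => @Fintype.ofFinite _ (AVMfinite_mat _ _)
  letI : Fintype {A : Fin (m + 1) → Fin n → ℕ //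
      (∀ i, ∑ j, A i j = p i) ∧ (∀ j, ∑ i, A i j = q j)} :=
    @Fintype.ofFinite _ (AVMfinite_mat _ _)
  set AT := {a : Fin n → ℕ // (∀ j, a j ≤ q j) ∧ ∑ j, a j = p 0} with hAT
  let Fib : AT → Type _ := fun a => {B : Fin m → Fin n → ℕ //
      (∀ i, ∑ j, B i j = p i.succ) ∧ (∀ j, ∑ i, B i j = q j - a.1 j)}
  let g : (Σ a : AT, Fib a) → {A : Fin (m + 1) → Fin n → ℕ //
      (∀ i, ∑ j, A i j = p i) ∧ (∀ j, ∑ i, A i j = q j)} := fun x =>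
    ⟨fun i => Fin.cases x.1.1 (fun i' => x.2.1 i') i, by
      intro i
      induction i using Fin.cases with
      | zero => simpa using x.1.2.2
      | succ i' => simpa using x.2.2.1 i', by
      intro j
      rw [Fin.sum_univ_succ]
      simp only [Fin.cases_zero, Fin.cases_succ]
      rw [x.2.2.2 j]
      have := x.1.2.1 j
      omega⟩
  have hginj : Function.Injective g := by
    intro x y hxy
    obtain ⟨⟨a, ha⟩, ⟨B, hB⟩⟩ := x
    obtain ⟨⟨a', ha'⟩, ⟨B', hB'⟩⟩ := y
    have h := congrArg Subtype.val hxy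
    simp only [g] at h
    have h0 : a = a' := by
      have := congrFun h 0
      simpa using this
    subst h0
    have h1 : B = B' := by
      funext i'
      have := congrFun h i'.succ
      simpa using this
    subst h1
    rfl
  have hgsurj : Function.Surjective g := by
    intro A
    have hb : ∀ j, A.1 0 j ≤ q j := by
      intro j
      rw [← A.2.2 j]
      exact Finset.single_le_sum (f := fun i => A.1 i j) (fun _ _ => Nat.zero_le _) (Finset.mem_univ (0 : Fin (m + 1)))
    have hcol : ∀ j, ∑ i' : Fin m, A.1 i'.succ j = q j - A.1 0 j := by
      intro j
      have := A.2.2 j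
      rw [Fin.sum_univ_succ] at this
      omega
    refine ⟨⟨⟨A.1 0, hb, A.2.1 0⟩, ⟨fun i' => A.1 i'.succ, fun i' => A.2.1 i'.succ, hcol⟩⟩, ?_⟩
    apply Subtype.ext
    funext i
    induction i using Fin.cases with
    | zero => rfl
    | succ i' => rfl
  rw [finsum_eq_sum_of_fintype]
  have h1 : natM (m + 1) n p q = Fintype.card {A : Fin (m + 1) → Fin n → ℕ //
      (∀ i, ∑ j, A i j = p i) ∧ (∀ j, ∑ i, A i j = q j)} := Nat.card_eq_fintype_card
  have h2 := Fintype.card_congr (Equiv.ofBijective g ⟨hginj, hgsurj⟩)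
  rw [h1, ← h2, Fintype.card_sigma]
  refine Finset.sum_congr rfl fun a _ => ?_
  show Fintype.card (Fib a) = _
  exact (Nat.card_eq_fintype_card).symm

lemma AVMcount_fiber {n : ℕ} (N : ℕ) (q : Fin n → ℕ) (s : ℕ → ℕ)
    (hq : ∀ j, q j ≤ N) (hchain : ∀ k, s k ≤ countVec q k + s (k + 1))
    (hvan : ∀ k, N ≤ k → s k = 0) :
    Nat.card {a : Fin n → ℕ // (∀ j, a j ≤ q j) ∧ ∀ k, AVMstat q a k = s k}
      = ∏ k ∈ Finset.range N, (countVec q k + s (k + 1)).choose (s k) := by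
  induction N generalizing q s with
  | zero =>
    have hs : ∀ k, s k = 0 := fun k => hvan k (Nat.zero_le k)
    rw [Finset.range_zero, Finset.prod_empty, Nat.card_eq_one_iff_unique]
    constructor
    · constructor
      intro a b
      apply Subtype.ext; funext j
      have := a.2.1 j; have := b.2.1 j; have := hq j
      omega
    · refine ⟨⟨fun _ => 0, fun j => Nat.zero_le _, fun k => ?_⟩⟩
      rw [hs k, AVMstat, Finset.card_eq_zero]
      ext j
      simp only [AVMstatSet, Finset.mem_filter, Finset.mem_univ, true_and,
        Finset.notMem_empty, iff_false]
      have := hq j; omega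
  | succ N ih =>
    classical
    set q' : Fin n → ℕ := fun j => q j - 1 with hq'def
    have hcount' : ∀ k, countVec q' k = countVec q (k + 1) := by
      intro k
      rw [countVec, countVec]
      congr 1
      ext j
      simp only [Finset.mem_filter, Finset.mem_univ, true_and, hq'def]
      omega
    letI instX' : Fintype {a' : Fin n → ℕ //
        (∀ j, a' j ≤ q' j) ∧ ∀ k, AVMstat q' a' k = s (k + 1)} :=
      @Fintype.ofFinite _ (AVMfinite_le q' _)
    letI instX : Fintype {a : Fin n → ℕ // (∀ j, a j ≤ q j) ∧ ∀ k, AVMstat q a k = s k} :=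
      @Fintype.ofFinite _ (AVMfinite_le q _)
    let D : (Fin n → ℕ) → Finset (Fin n) := fun a' =>
      (Finset.univ.filter fun j => q j = 0 + 1) ∪ AVMstatSet q' a' 0
    -- key facts about the gluing map
    have hkey : ∀ a' : Fin n → ℕ, (∀ j, a' j ≤ q' j) →
        ∀ S : Finset (Fin n), S ⊆ D a' →
        (∀ j, (if j ∈ S then a' j + 1 else a' j) ≤ q j)
        ∧ (AVMstatSet q (fun j => if j ∈ S then a' j + 1 else a' j) 0 = S)
        ∧ (∀ k, AVMstatSet q (fun j => if j ∈ S then a' j + 1 else a' j) (k + 1)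
            = AVMstatSet q' a' k) := by
      intro a' h1 S hsub
      have hD : ∀ j ∈ S, q j = 1 ∨ (1 ≤ q j - 1 ∧ q j - 1 ≤ a' j) := by
        intro j hj
        have := hsub hj
        simp only [D, AVMstatSet, Finset.mem_union, Finset.mem_filter, Finset.mem_univ,
          true_and, hq'def] at this
        omega
      have hq1 : ∀ j, a' j ≤ q j - 1 := by
        intro j; have := h1 j; simpa [hq'def] using this
      refine ⟨?_, ?_, ?_⟩
      · intro j
        have := hq1 j
        by_cases hj : j ∈ S
        · have := hD j hj; simp only [if_pos hj]; omega
        · simp only [if_neg hj]; omega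
      · ext j
        simp only [AVMstatSet, Finset.mem_filter, Finset.mem_univ, true_and]
        by_cases hj : j ∈ S
        · have := hD j hj; have := hq1 j
          rw [if_pos hj]
          exact iff_of_true (by omega) hj
        · have := hq1 j
          rw [if_neg hj]
          exact iff_of_false (by omega) hj
      · intro k
        ext j
        simp only [AVMstatSet, Finset.mem_filter, Finset.mem_univ, true_and, hq'def]
        by_cases hj : j ∈ S
        · have := hD j hj; have := hq1 j
          simp only [if_pos hj]
          omega
        · have := hq1 j
          simp only [if_neg hj]
          omega
    let X' := {a' : Fin n → ℕ // (∀ j, a' j ≤ q' j) ∧ ∀ k, AVMstat q' a' k = s (k + 1)}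
    let X := {a : Fin n → ℕ // (∀ j, a j ≤ q j) ∧ ∀ k, AVMstat q a k = s k}
    have hDcard : ∀ a' : X', (D a'.1).card = countVec q 0 + s 1 := by
      intro a'
      rw [Finset.card_union_of_disjoint]
      · congr 1
        exact a'.2.2 0
      · rw [Finset.disjoint_left]
        intro j hj1 hj2
        simp only [Finset.mem_filter, Finset.mem_univ, true_and] at hj1
        simp only [AVMstatSet, Finset.mem_filter, Finset.mem_univ, true_and, hq'def] at hj2
        omega
    let g : (Σ a' : X', {S : Finset (Fin n) // S ∈ Finset.powersetCard (s 0) (D a'.1)}) → X :=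
      fun x =>
      ⟨fun j => if j ∈ x.2.1 then x.1.1 j + 1 else x.1.1 j, by
        obtain ⟨hsub, hcard⟩ := Finset.mem_powersetCard.mp x.2.2
        obtain ⟨k1, k2, k3⟩ := hkey x.1.1 x.1.2.1 x.2.1 hsub
        refine ⟨k1, fun k => ?_⟩
        cases k with
        | zero => rw [AVMstat, k2, hcard]
        | succ k => rw [AVMstat, k3 k]; exact x.1.2.2 k⟩
    have hginj : Function.Injective g := by
      intro x y hxy
      obtain ⟨⟨a₁, h₁⟩, ⟨S₁, hS₁⟩⟩ := x
      obtain ⟨⟨a₂, h₂⟩, ⟨S₂, hS₂⟩⟩ := y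
      have hv := congrArg Subtype.val hxy
      simp only [g] at hv
      obtain ⟨hsub₁, hcard₁⟩ := Finset.mem_powersetCard.mp hS₁
      obtain ⟨hsub₂, hcard₂⟩ := Finset.mem_powersetCard.mp hS₂
      have e₁ := (hkey a₁ h₁.1 S₁ hsub₁).2.1
      have e₂ := (hkey a₂ h₂.1 S₂ hsub₂).2.1
      have hSS : S₁ = S₂ := by rw [← e₁, ← e₂, hv]
      subst hSS
      have haa : a₁ = a₂ := by
        funext j
        have hj' := congrFun hv j
        by_cases hj : j ∈ S₁
        · simp only [hj, if_true] at hj'; omega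
        · simp only [hj, if_false] at hj'; exact hj'
      subst haa
      rfl
    have hgsurj : Function.Surjective g := by
      rintro ⟨a, hale, hast⟩
      have hSa : ∀ j, j ∈ AVMstatSet q a 0 ↔ (1 ≤ q j ∧ q j ≤ a j + 0) := by
        intro j; simp [AVMstatSet]
      set S := AVMstatSet q a 0 with hSdef
      let a' : Fin n → ℕ := fun j => if j ∈ S then a j - 1 else a j
      have ha'le : ∀ j, a' j ≤ q' j := by
        intro j
        have := hale j
        by_cases hj : j ∈ S
        · have := (hSa j).mp hj
          simp only [a', if_pos hj, hq'def]; omega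
        · have h0 : ¬(1 ≤ q j ∧ q j ≤ a j + 0) := fun c => hj ((hSa j).mpr c)
          simp only [a', if_neg hj, hq'def]; omega
      have ha'st : ∀ k, AVMstat q' a' k = s (k + 1) := by
        intro k
        have hset : AVMstatSet q' a' k = AVMstatSet q a (k + 1) := by
          ext j
          simp only [AVMstatSet, Finset.mem_filter, Finset.mem_univ, true_and, hq'def]
          by_cases hj : j ∈ S
          · have := (hSa j).mp hj; have := hale j
            simp only [a', if_pos hj]
            omega
          · have h0 : ¬(1 ≤ q j ∧ q j ≤ a j + 0) := fun c => hj ((hSa j).mpr c)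
            have := hale j
            simp only [a', if_neg hj]
            omega
        rw [AVMstat, hset]
        exact hast (k + 1)
      have hSsub : S ⊆ D a' := by
        intro j hj
        have h2 := (hSa j).mp hj
        have := hale j
        simp only [D, AVMstatSet, Finset.mem_union, Finset.mem_filter, Finset.mem_univ,
          true_and, hq'def, a', if_pos hj]
        omega
      have hScard : S.card = s 0 := hast 0
      refine ⟨⟨⟨a', ha'le, ha'st⟩, ⟨S, Finset.mem_powersetCard.mpr ⟨hSsub, hScard⟩⟩⟩, ?_⟩
      apply Subtype.ext
      funext j
      show (if j ∈ S then a' j + 1 else a' j) = a j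
      by_cases hj : j ∈ S
      · have := (hSa j).mp hj
        simp only [a', if_pos hj]
        omega
      · simp only [a', if_neg hj]
    -- now count
    have hIH := ih q' (fun k => s (k + 1))
      (fun j => by simp only [hq'def]; have := hq j; omega)
      (fun k => by rw [hcount']; exact hchain (k + 1))
      (fun k hk => hvan (k + 1) (by omega))
    have hcardX : Nat.card X
        = (Fintype.card X') * ((countVec q 0 + s 1).choose (s 0)) := by
      rw [Nat.card_eq_fintype_card]
      rw [Fintype.card_congr (Equiv.ofBijective g ⟨hginj, hgsurj⟩).symm]
      rw [Fintype.card_sigma]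
      calc ∑ a' : X', Fintype.card {S : Finset (Fin n) // S ∈ Finset.powersetCard (s 0) (D a'.1)}
          = ∑ a' : X', (Finset.powersetCard (s 0) (D a'.1)).card := by
            refine Finset.sum_congr rfl fun a' _ => ?_
            exact Fintype.card_coe _
        _ = ∑ a' : X', (countVec q 0 + s 1).choose (s 0) := by
            refine Finset.sum_congr rfl fun a' _ => ?_
            rw [Finset.card_powersetCard, hDcard]
        _ = (Fintype.card X') * ((countVec q 0 + s 1).choose (s 0)) := by
            rw [Finset.sum_const, Finset.card_univ, smul_eq_mul]
    rw [hcardX, Finset.prod_range_succ']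
    rw [← Nat.card_eq_fintype_card (α := X'), hIH]
    congr 1
    refine Finset.prod_congr rfl fun k _ => ?_
    rw [hcount']

/-- Recursion for the number of ℕ-valued matrices with margins `(p, q)`:
`M(p,q) = Σ_s (r + Ls choose s) · M((p_2,...,p_m), q_s)`, summing over finitely supported
`s ∈ ℕ^∞` with `Σ_i s_i = p_1` and `s ≤ r + Ls`, where `r = bar q` and for each such `s`,
`q_s` (here `qs s`, of length `ns s`) is any vector whose count vector is `r ⊖ s = r - s + Ls`.
Sequences in `ℕ^∞` are 0-based here: index `k` stands for position `k+1`. -/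
theorem stmt1 (m n : ℕ) (p : Fin (m + 1) → ℕ) (q : Fin n → ℕ)
    (r : ℕ → ℕ) (hr : ∀ k, r k = countVec q k)
    (ns : (ℕ → ℕ) → ℕ) (qs : ∀ s : ℕ → ℕ, Fin (ns s) → ℕ)
    (hqs : ∀ s : ℕ → ℕ, {k | s k ≠ 0}.Finite → (∀ k, s k ≤ r k + s (k + 1)) →
      (∑ᶠ k, s k) = p 0 →
      ∀ k, (countVec (qs s) k : ℤ) = (r k : ℤ) - s k + s (k + 1)) :
    natM (m + 1) n p q =
      ∑ᶠ s ∈ {s : ℕ → ℕ | {k | s k ≠ 0}.Finite ∧ (∀ k, s k ≤ r k + s (k + 1)) ∧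
          (∑ᶠ k, s k) = p 0},
        (∏ᶠ k, (r k + s (k + 1)).choose (s k)) * natM m (ns s) (fun i => p i.succ) (qs s) := by
  classical
  have hrw : r = fun k => countVec q k := funext hr
  subst hrw
  obtain ⟨N, hqN⟩ : ∃ N, ∀ j, q j ≤ N :=
    ⟨Finset.univ.sup q, fun j => Finset.le_sup (Finset.mem_univ j)⟩
  have hrN : ∀ k, N ≤ k → countVec q k = 0 := by
    intro k hk
    rw [countVec, Finset.card_eq_zero]
    ext j
    simp only [Finset.mem_filter, Finset.mem_univ, true_and, Finset.notMem_empty, iff_false]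
    have := hqN j; omega
  set SS : Set (ℕ → ℕ) := {s : ℕ → ℕ | {k | s k ≠ 0}.Finite ∧
      (∀ k, s k ≤ (fun k => countVec q k) k + s (k + 1)) ∧ (∑ᶠ k, s k) = p 0} with hSSdef
  have hvan : ∀ s ∈ SS, ∀ k, N ≤ k → s k = 0 := by
    intro s hs
    obtain ⟨hfin, hchain, _⟩ := hs
    obtain ⟨K, hK⟩ := hfin.bddAbove
    have hK' : ∀ k, K + 1 ≤ k → s k = 0 := by
      intro k hk
      by_contra hne
      have : k ≤ K := hK hne
      omega
    have mono : ∀ t k, N ≤ k → s k ≤ s (k + t) := by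
      intro t
      induction t with
      | zero => intro k _; simp
      | succ t iht =>
        intro k hk
        have h1 := iht k hk
        have h2 := hchain (k + t)
        have h3 := hrN (k + t) (by omega)
        simp only at h2 h3
        have : k + (t + 1) = k + t + 1 := by omega
        rw [this]
        omega
    intro k hk
    have h0 := hK' (k + (K + 1)) (by omega)
    have h1 := mono (K + 1) k hk
    omega
  have hfs : ∀ s : ℕ → ℕ, (∀ k, N ≤ k → s k = 0) →
      (∑ᶠ k, s k) = ∑ k ∈ Finset.range N, s k := by
    intro s hv
    apply finsum_eq_sum_of_support_subset
    intro k hk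
    simp only [Function.support, Set.mem_setOf_eq] at hk
    simp only [Finset.coe_range, Set.mem_Iio]
    by_contra hc
    exact hk (hv k (by omega))
  have hsumN : ∀ s ∈ SS, ∑ k ∈ Finset.range N, s k = p 0 := by
    intro s hs
    rw [← hfs s (hvan s hs)]
    exact hs.2.2
  have hSfin : SS.Finite := by
    have hsub : SS ⊆ {s : ℕ → ℕ | (∀ k, s k ≤ p 0) ∧ ∀ k, N ≤ k → s k = 0} := by
      intro s hs
      have hv := hvan s hs
      refine ⟨fun k => ?_, hv⟩
      by_cases hk : k < N
      · have h1 : s k ≤ ∑ k ∈ Finset.range N, s k :=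
          Finset.single_le_sum (f := fun k => s k) (fun _ _ => Nat.zero_le _)
            (Finset.mem_range.mpr hk)
        rw [hsumN s hs] at h1
        exact h1
      · rw [hv k (by omega)]
        exact Nat.zero_le _
    refine Set.Finite.subset ?_ hsub
    apply Set.Finite.of_finite_image
      (f := fun (s : ℕ → ℕ) => fun k : Fin N => (⟨min (s k.1) (p 0), by omega⟩ : Fin (p 0 + 1)))
    · exact Set.toFinite _
    · intro s1 h1 s2 h2 he
      funext k
      by_cases hk : k < N
      · have h := congrArg Fin.val (congrFun he ⟨k, hk⟩)
        simp only [min_eq_left (h1.1 k), min_eq_left (h2.1 k)] at h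
        exact h
      · rw [h1.2 k (by omega), h2.2 k (by omega)]
  rw [AVMnatM_succ p q]
  letI instAT : Fintype {a : Fin n → ℕ // (∀ j, a j ≤ q j) ∧ ∑ j, a j = p 0} :=
    @Fintype.ofFinite _ (AVMfinite_le q _)
  rw [finsum_eq_sum_of_fintype]
  rw [finsum_mem_eq_finite_toFinset_sum _ hSfin]
  have hmaps : ∀ a : {a : Fin n → ℕ // (∀ j, a j ≤ q j) ∧ ∑ j, a j = p 0},
      a ∈ Finset.univ → AVMstat q a.1 ∈ hSfin.toFinset := by
    intro a _
    rw [Set.Finite.mem_toFinset]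
    have hv : ∀ k, N ≤ k → AVMstat q a.1 k = 0 := fun k hk => AVMstat_vanish q a.1 hqN k hk
    refine ⟨?_, fun k => AVMstat_chain q a.1 k, ?_⟩
    · apply Set.Finite.subset (Set.finite_Iio N)
      intro k hk
      simp only [Set.mem_setOf_eq] at hk
      simp only [Set.mem_Iio]
      by_contra hc
      exact hk (hv k (by omega))
    · rw [hfs _ hv, AVMsum_stat q a.1 hqN a.2.1]
      exact a.2.2
  rw [← Finset.sum_fiberwise_of_maps_to hmaps]
  refine Finset.sum_congr rfl fun s hsT => ?_
  have hsS : s ∈ SS := (hSfin.mem_toFinset).mp hsT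
  obtain ⟨hfin, hchain, hsum⟩ := hsS
  have hchain' : ∀ k, s k ≤ countVec q k + s (k + 1) := fun k => hchain k
  have hv : ∀ k, N ≤ k → s k = 0 := hvan s ⟨hfin, hchain, hsum⟩
  have hcv : ∀ k, (countVec (qs s) k : ℤ)
      = (countVec q k : ℤ) - s k + s (k + 1) := hqs s hfin hchain hsum
  have hconst : ∀ a ∈ Finset.univ.filter
      (fun a : {a : Fin n → ℕ // (∀ j, a j ≤ q j) ∧ ∑ j, a j = p 0} => AVMstat q a.1 = s),
      natM m n (fun i => p i.succ) (fun j => q j - a.1 j)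
        = natM m (ns s) (fun i => p i.succ) (qs s) := by
    intro a ha
    have hstat : AVMstat q a.1 = s := (Finset.mem_filter.mp ha).2
    apply AVMnatM_congr
    intro k
    have h1 := AVMcountVec_sub q a.1 a.2.1 k
    rw [hstat] at h1
    have h2 := hcv k
    have h3 : (countVec (fun j => q j - a.1 j) k : ℤ) = (countVec (qs s) k : ℤ) := by
      rw [h1, h2]
    exact_mod_cast h3
  rw [Finset.sum_congr rfl hconst, Finset.sum_const, smul_eq_mul]
  congr 1
  have hprod : (∏ᶠ k, ((fun k => countVec q k) k + s (k + 1)).choose (s k))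
      = ∏ k ∈ Finset.range N, (countVec q k + s (k + 1)).choose (s k) := by
    apply finprod_eq_prod_of_mulSupport_subset
    intro k hk
    simp only [Function.mulSupport, Set.mem_setOf_eq] at hk
    simp only [Finset.coe_range, Set.mem_Iio]
    by_contra hc
    apply hk
    rw [hrN k (by omega), hv k (by omega), hv (k + 1) (by omega)]
    rfl
  rw [hprod]
  have e : {a : {a : Fin n → ℕ // (∀ j, a j ≤ q j) ∧ ∑ j, a j = p 0} // AVMstat q a.1 = s}
      ≃ {a : Fin n → ℕ // (∀ j, a j ≤ q j) ∧ ∀ k, AVMstat q a k = s k} :=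
    { toFun := fun x => ⟨x.1.1, x.1.2.1, fun k => congrFun x.2 k⟩
      invFun := fun y => ⟨⟨y.1, y.2.1, by
        rw [← AVMsum_stat q y.1 hqN y.2.1]
        have : ∑ k ∈ Finset.range N, AVMstat q y.1 k = ∑ k ∈ Finset.range N, s k :=
          Finset.sum_congr rfl fun k _ => y.2.2 k
        rw [this]
        exact hsumN s ⟨hfin, hchain, hsum⟩⟩, funext y.2.2⟩
      left_inv := fun x => rfl
      right_inv := fun y => rfl }
  have hff : (Finset.univ.filter
      (fun a : {a : Fin n → ℕ // (∀ j, a j ≤ q j) ∧ ∑ j, a j = p 0} => AVMstat q a.1 = s)).card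
      = Nat.card {a : Fin n → ℕ // (∀ j, a j ≤ q j) ∧ ∀ k, AVMstat q a k = s k} := by
    rw [← Fintype.card_subtype]
    letI : Fintype {a : Fin n → ℕ // (∀ j, a j ≤ q j) ∧ ∀ k, AVMstat q a k = s k} :=
      @Fintype.ofFinite _ (AVMfinite_le q _)
    rw [Fintype.card_congr e, Nat.card_eq_fintype_card]
  rw [hff]
  exact AVMcount_fiber N q s hqN hchain' hv
end

section
/- Let (p,q) ∈ ℕ^m × ℕ^n with Σ_i p_i = Σ_j q_j, and let b = max_j q_j. Suppose r^1 = bar q and, for i = 1,...,j−1 (where 1 ≤ j ≤ m), s^i ∈ C^{r^i}(p_i) and r^{i+1} = r^i ⊖ s^i. Then W(r^j) = Σ_{i=j}^m p_i, and r^j_k = 0 for all k > b; that is, r^j ∈ Δ_b(t_j) where t_j = Σ_{i=j}^m p_i. -/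
open scoped BigOperators

/-- Descendants lemma: with `Σ p = Σ q`, `b = max q`, `r^1 = bar q`, and for `i = 1,...,j-1`,
`s^i ∈ C^{r^i}(p_i)` and `r^{i+1} = r^i ⊖ s^i`, we get `W(r^j) = Σ_{i=j}^m p_i` and
`r^j_k = 0` for all `k > b`, i.e. `r^j ∈ Δ_b(t_j)` with `t_j = Σ_{i=j}^m p_i`.
Everything is 0-based here: `r i` is `r^{i+1}`, `s i` is `s^{i+1}`, sequence index `k` stands
for position `k+1` (so `r^j_k = 0` for `k > b` reads `r (j-1) k = 0` for `k + 1 > b`),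
and the weight `W(r) = Σ_k k·r_k` becomes `∑ᶠ k, (k+1)·r k`. -/
theorem stmt9 (m n : ℕ) (p : Fin m → ℕ) (q : Fin n → ℕ)
    (hpq : ∑ i, p i = ∑ j, q j)
    (b : ℕ) (hb : b = Finset.univ.sup q)
    (j : ℕ) (hj1 : 1 ≤ j) (hjm : j ≤ m)
    (r s : ℕ → ℕ → ℕ)
    (hr0 : ∀ k, r 0 k = countVec q k)
    (hstep : ∀ i (hi : i < j - 1),
      (∀ k, s i k ≤ r i k) ∧ (∑ᶠ k, s i k) = p ⟨i, by omega⟩ ∧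
      (∀ k, r (i + 1) k = r i k + s i (k + 1) - s i k)) :
    (∑ᶠ k : ℕ, (k + 1) * r (j - 1) k) =
      (∑ i ∈ Finset.univ.filter (fun i : Fin m => j - 1 ≤ (i : ℕ)), p i) ∧
    ∀ k : ℕ, b < k + 1 → r (j - 1) k = 0 := by
  have hq_le : ∀ jj : Fin n, q jj ≤ b := fun jj => hb ▸ Finset.le_sup (Finset.mem_univ jj)
  have hzero0 : ∀ k, b ≤ k → r 0 k = 0 := by
    intro k hk
    rw [hr0]
    unfold countVec
    rw [Finset.card_eq_zero, Finset.filter_eq_empty_iff]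
    intro jj _
    have := hq_le jj
    omega
  have hbase : ∑ k ∈ Finset.range b, (k + 1) * r 0 k = ∑ jj, q jj := by
    have h1 : ∀ k ∈ Finset.range b, (k + 1) * r 0 k =
        ∑ jj : Fin n, if q jj = k + 1 then k + 1 else 0 := by
      intro k _
      rw [hr0]
      unfold countVec
      rw [Finset.card_filter, Finset.mul_sum]
      exact Finset.sum_congr rfl fun jj _ => by split_ifs <;> simp
    rw [Finset.sum_congr rfl h1, Finset.sum_comm]
    refine Finset.sum_congr rfl fun jj _ => ?_
    have h2 : ∀ k, (if q jj = k + 1 then k + 1 else 0) =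
        (if k = q jj - 1 then q jj else 0) := by
      intro k; split_ifs <;> omega
    rw [Finset.sum_congr rfl fun k _ => h2 k, Finset.sum_ite_eq' (Finset.range b)]
    have := hq_le jj
    split_ifs with h <;> simp [Finset.mem_range] at h <;> omega
  have key : ∀ i, i ≤ j - 1 → (∀ k, b ≤ k → r i k = 0) ∧
      (∑ k ∈ Finset.range b, (k + 1) * r i k) +
        (∑ l ∈ Finset.univ.filter (fun l : Fin m => (l : ℕ) < i), p l) = ∑ i, p i := by
    intro i
    induction i with
    | zero =>
      intro _
      refine ⟨hzero0, ?_⟩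
      have : (Finset.univ.filter (fun l : Fin m => (l : ℕ) < 0)) = ∅ := by
        apply Finset.filter_eq_empty_iff.mpr; intro l _; omega
      rw [this, hbase, hpq]
      simp
    | succ i ih =>
      intro hi
      have hi' : i < j - 1 := by omega
      obtain ⟨hz, hw⟩ := ih (by omega)
      obtain ⟨hsle, hsum, hrec⟩ := hstep i hi'
      have him : i < m := by omega
      have hzs : ∀ k, b ≤ k → s i k = 0 := by
        intro k hk
        have := hsle k
        have := hz k hk
        omega
      have hz' : ∀ k, b ≤ k → r (i + 1) k = 0 := by
        intro k hk
        rw [hrec k, hz k hk, hzs k hk, hzs (k + 1) (by omega)]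
      refine ⟨hz', ?_⟩
      have hkey : ∀ k, r (i + 1) k + s i k = r i k + s i (k + 1) := by
        intro k
        have := hsle k
        rw [hrec k]
        omega
      have hsum_b : ∑ k ∈ Finset.range b, s i k = p ⟨i, him⟩ := by
        rw [← hsum]
        refine (finsum_eq_finset_sum_of_support_subset _ ?_).symm
        intro k hk
        simp only [Function.mem_support] at hk
        simp only [Finset.coe_range, Set.mem_Iio]
        by_contra h
        exact hk (hzs k (by omega))
      have e1 : (∑ k ∈ Finset.range b, (k + 1) * r (i + 1) k) +
          (∑ k ∈ Finset.range b, (k + 1) * s i k) =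
          (∑ k ∈ Finset.range b, (k + 1) * r i k) +
          (∑ k ∈ Finset.range b, (k + 1) * s i (k + 1)) := by
        rw [← Finset.sum_add_distrib, ← Finset.sum_add_distrib]
        refine Finset.sum_congr rfl fun k _ => ?_
        rw [← Nat.mul_add, ← Nat.mul_add, hkey k]
      have e2 : ∑ k ∈ Finset.range b, (k + 1) * s i (k + 1) =
          ∑ k ∈ Finset.range b, k * s i k := by
        have h3 := Finset.sum_range_succ' (fun k => k * s i k) b
        rw [Finset.sum_range_succ] at h3
        have hb0 : s i b = 0 := hzs b le_rfl
        simp only [hb0, Nat.mul_zero, Nat.add_zero, Nat.zero_mul] at h3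
        exact h3.symm
      have e3 : ∑ k ∈ Finset.range b, (k + 1) * s i k =
          (∑ k ∈ Finset.range b, k * s i k) + ∑ k ∈ Finset.range b, s i k := by
        rw [← Finset.sum_add_distrib]
        exact Finset.sum_congr rfl fun k _ => by ring
      have e4 : ∑ l ∈ Finset.univ.filter (fun l : Fin m => (l : ℕ) < i + 1), p l =
          (∑ l ∈ Finset.univ.filter (fun l : Fin m => (l : ℕ) < i), p l) + p ⟨i, him⟩ := by
        have h5 : p ⟨i, him⟩ = ∑ l : Fin m, if l = ⟨i, him⟩ then p l else 0 := by
          rw [Finset.sum_ite_eq' Finset.univ (⟨i, him⟩ : Fin m) p]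
          simp
        rw [Finset.sum_filter, Finset.sum_filter, h5, ← Finset.sum_add_distrib]
        refine Finset.sum_congr rfl fun l _ => ?_
        have hl : (l = (⟨i, him⟩ : Fin m)) ↔ ((l : ℕ) = i) := by
          rw [Fin.ext_iff]
        simp only [hl]
        split_ifs <;> omega
      rw [e4]
      omega
  obtain ⟨hz, hw⟩ := key (j - 1) le_rfl
  have hfs : (∑ᶠ k : ℕ, (k + 1) * r (j - 1) k) =
      ∑ k ∈ Finset.range b, (k + 1) * r (j - 1) k := by
    refine finsum_eq_finset_sum_of_support_subset _ ?_
    intro k hk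
    simp only [Function.mem_support] at hk
    simp only [Finset.coe_range, Set.mem_Iio]
    by_contra h
    exact hk (by rw [hz k (by omega)]; ring)
  have hsplit := Finset.sum_filter_add_sum_filter_not Finset.univ
      (fun l : Fin m => (l : ℕ) < j - 1) p
  have hfe : Finset.univ.filter (fun l : Fin m => ¬ (l : ℕ) < j - 1) =
      Finset.univ.filter (fun l : Fin m => j - 1 ≤ (l : ℕ)) := by
    apply Finset.filter_congr
    intro l _
    simp [Nat.not_lt]
  rw [hfe] at hsplit
  constructor
  · rw [hfs]
    omega
  · intro k hk
    exact hz k (by omega)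
end

section
/- Let q ∈ ℕ^n and let u ∈ ℕ^n with u ≤ q componentwise. Then there is a unique finitely supported s ∈ ℕ^∞ such that bar(q − u) = bar q ⊖ s, namely s_i = Σ_{j=i}^∞ (bar q_j − (bar(q−u))_j) for each i ≥ 1; moreover this s satisfies Σ_i s_i = Σ_j u_j. -/
open scoped BigOperators

/-- For `u ≤ q` there is a unique finitely supported `s ∈ ℕ^∞` with
`bar(q - u) = bar q ⊖ s = bar q - s + Ls`, namely
`s_i = Σ_{j=i}^∞ (bar q_j - (bar(q-u))_j)`, and it satisfies `Σ_i s_i = Σ_j u_j`.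
Sequences in `ℕ^∞` are 0-based here: index `k` stands for position `k+1`. -/
theorem stmt13 (n : ℕ) (q u : Fin n → ℕ) (hu : ∀ j, u j ≤ q j) :
    (∃! s : ℕ → ℕ, {k | s k ≠ 0}.Finite ∧
        ∀ k, (countVec (fun j => q j - u j) k : ℤ) =
          (countVec q k : ℤ) - s k + s (k + 1)) ∧
    ∀ s : ℕ → ℕ,
      ({k | s k ≠ 0}.Finite ∧
        ∀ k, (countVec (fun j => q j - u j) k : ℤ) =
          (countVec q k : ℤ) - s k + s (k + 1)) →
      (∀ k, (s k : ℤ) = ∑ᶠ i : ℕ,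
          if k ≤ i then (countVec q i : ℤ) - countVec (fun j => q j - u j) i else 0) ∧
      (∑ᶠ k, s k) = ∑ j, u j := by
  classical
  set M := ∑ j, q j with hMdef
  have hqM : ∀ j, q j ≤ M := fun j =>
    Finset.single_le_sum (fun _ _ => Nat.zero_le _) (Finset.mem_univ j)
  set c : ℕ → ℕ := countVec q with hcdef
  set d : ℕ → ℕ := countVec (fun j => q j - u j) with hddef
  set A : ℕ → ℕ := fun k => (Finset.univ.filter fun j : Fin n => k + 1 ≤ q j).card with hAdef
  set B : ℕ → ℕ := fun k => (Finset.univ.filter fun j : Fin n => k + 1 ≤ q j - u j).card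
    with hBdef
  have hBA : ∀ k, B k ≤ A k := by
    intro k
    apply Finset.card_le_card
    intro j hj
    simp only [Finset.mem_filter, Finset.mem_univ, true_and] at hj ⊢
    omega
  set s₀ : ℕ → ℕ := fun k => A k - B k with hs₀def
  -- splitting identity
  have split : ∀ (f : Fin n → ℕ) (k : ℕ),
      (Finset.univ.filter fun j => k + 1 ≤ f j).card
        = (Finset.univ.filter fun j => f j = k + 1).card
          + (Finset.univ.filter fun j => k + 1 + 1 ≤ f j).card := by
    intro f k
    simp only [Finset.card_filter]
    rw [← Finset.sum_add_distrib]
    refine Finset.sum_congr rfl fun j _ => ?_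
    split_ifs <;> omega
  have hA : ∀ k, A k = c k + A (k + 1) := fun k => split q k
  have hB : ∀ k, B k = d k + B (k + 1) := fun k => split (fun j => q j - u j) k
  -- vanishing beyond M
  have hA0 : ∀ k, M ≤ k → A k = 0 := by
    intro k hk
    rw [hAdef]
    rw [Finset.card_eq_zero, Finset.filter_eq_empty_iff]
    intro j _
    have := hqM j; omega
  have hc0 : ∀ k, M ≤ k → c k = 0 := by
    intro k hk
    have h1 := hA k
    have h2 := hA0 k hk
    omega
  have hd0 : ∀ k, M ≤ k → d k = 0 := by
    intro k hk
    have h1 := hB k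
    have h2 := hBA k
    have h3 := hA0 k hk
    omega
  have hs0 : ∀ k, M ≤ k → s₀ k = 0 := by
    intro k hk
    have h2 := hBA k
    have h3 := hA0 k hk
    simp only [hs₀def]
    omega
  -- key recurrence for s₀
  have key : ∀ k, (s₀ k : ℤ) = (c k : ℤ) - d k + s₀ (k + 1) := by
    intro k
    have h1 := hA k
    have h2 := hB k
    have h3 := hBA k
    have h4 := hBA (k + 1)
    simp only [hs₀def]
    omega
  have heqn₀ : ∀ k, (d k : ℤ) = (c k : ℤ) - s₀ k + s₀ (k + 1) := by
    intro k
    have := key k; omega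
  have hfin₀ : {k | s₀ k ≠ 0}.Finite := by
    apply (Set.finite_Iio M).subset
    intro k hk
    simp only [Set.mem_setOf_eq] at hk
    simp only [Set.mem_Iio]
    by_contra h
    exact hk (hs0 k (by omega))
  -- uniqueness
  have huniq : ∀ s : ℕ → ℕ,
      ({k | s k ≠ 0}.Finite ∧ ∀ k, (d k : ℤ) = (c k : ℤ) - s k + s (k + 1)) →
      ∀ k, s k = s₀ k := by
    intro s ⟨hfin, heq⟩ k
    obtain ⟨N, hN⟩ := hfin.bddAbove
    have hszero : ∀ m, N + 1 ≤ m → s m = 0 := by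
      intro m hm
      by_contra h
      have := hN (Set.mem_setOf_eq ▸ h : m ∈ {k | s k ≠ 0})
      omega
    have step : ∀ m k, (s k : ℤ) - s₀ k = (s (k + m) : ℤ) - s₀ (k + m) := by
      intro m
      induction m with
      | zero => intro k; simp
      | succ m ih =>
        intro k
        have h1 := heq k
        have h2 := key k
        have h3 := ih (k + 1)
        have : (s k : ℤ) - s₀ k = (s (k + 1) : ℤ) - s₀ (k + 1) := by omega
        rw [this, h3]
        ring_nf
    have h := step (N + 1 + M) k
    have h1 : s (k + (N + 1 + M)) = 0 := hszero _ (by omega)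
    have h2 : s₀ (k + (N + 1 + M)) = 0 := hs0 _ (by omega)
    rw [h1, h2] at h
    omega
  -- closed form: telescoping
  have hQ : ∀ m k, M ≤ k + m →
      (s₀ k : ℤ) = ∑ i ∈ Finset.Ico k M, ((c i : ℤ) - d i) := by
    intro m
    induction m with
    | zero =>
      intro k hk
      rw [Finset.Ico_eq_empty (by omega), Finset.sum_empty, hs0 k (by omega)]
      simp
    | succ m ih =>
      intro k hk
      rcases le_or_gt M k with h | h
      · rw [Finset.Ico_eq_empty (by omega), Finset.sum_empty, hs0 k h]
        simp
      · rw [Finset.sum_eq_sum_Ico_succ_bot h, key k, ih (k + 1) (by omega)]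
  -- closed form with finsum
  have hclosed : ∀ k, (s₀ k : ℤ) = ∑ᶠ i : ℕ,
      if k ≤ i then (c i : ℤ) - d i else 0 := by
    intro k
    have hsupp : (Function.support fun i => if k ≤ i then (c i : ℤ) - d i else 0)
        ⊆ ↑(Finset.Ico k M) := by
      intro i hi
      simp only [Function.mem_support] at hi
      simp only [Finset.coe_Ico, Set.mem_Ico]
      rcases le_or_gt k i with h1 | h1
      · refine ⟨h1, ?_⟩
        by_contra h2
        rw [if_pos h1, hc0 i (by omega), hd0 i (by omega)] at hi
        simp at hi
      · rw [if_neg (by omega)] at hi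
        exact absurd rfl hi
    rw [finsum_eq_sum_of_support_subset _ hsupp, hQ M k (by omega)]
    exact Finset.sum_congr rfl fun i hi => (if_pos (Finset.mem_Ico.1 hi).1).symm
  -- sum identity for s₀
  have hs₀card : ∀ k, s₀ k
      = (Finset.univ.filter fun j : Fin n => q j - u j ≤ k ∧ k + 1 ≤ q j).card := by
    intro k
    have h3 := Finset.card_filter_add_card_filter_not
      (s := Finset.univ.filter fun j : Fin n => k + 1 ≤ q j)
      (p := fun j => k + 1 ≤ q j - u j)
    rw [Finset.filter_filter, Finset.filter_filter] at h3
    have e1 : (Finset.univ.filter fun j : Fin n => k + 1 ≤ q j ∧ k + 1 ≤ q j - u j)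
        = Finset.univ.filter fun j : Fin n => k + 1 ≤ q j - u j := by
      ext j
      simp only [Finset.mem_filter, Finset.mem_univ, true_and]
      omega
    have e2 : (Finset.univ.filter fun j : Fin n => k + 1 ≤ q j ∧ ¬ k + 1 ≤ q j - u j)
        = Finset.univ.filter fun j : Fin n => q j - u j ≤ k ∧ k + 1 ≤ q j := by
      ext j
      simp only [Finset.mem_filter, Finset.mem_univ, true_and]
      omega
    rw [e1, e2] at h3
    have hAk : (Finset.univ.filter fun j : Fin n => k + 1 ≤ q j).card = A k := rfl
    have hBk : (Finset.univ.filter fun j : Fin n => k + 1 ≤ q j - u j).card = B k := rfl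
    rw [hAk, hBk] at h3
    simp only [hs₀def]
    omega
  have hsum : ∑ k ∈ Finset.range M, s₀ k = ∑ j, u j := by
    calc ∑ k ∈ Finset.range M, s₀ k
        = ∑ k ∈ Finset.range M, ∑ j : Fin n,
            if q j - u j ≤ k ∧ k + 1 ≤ q j then 1 else 0 := by
          refine Finset.sum_congr rfl fun k _ => ?_
          rw [hs₀card k, Finset.card_filter]
      _ = ∑ j : Fin n, ∑ k ∈ Finset.range M,
            if q j - u j ≤ k ∧ k + 1 ≤ q j then 1 else 0 := Finset.sum_comm
      _ = ∑ j, u j := by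
          refine Finset.sum_congr rfl fun j _ => ?_
          rw [← Finset.card_filter]
          have e : Finset.filter (fun k => q j - u j ≤ k ∧ k + 1 ≤ q j) (Finset.range M)
              = Finset.Ico (q j - u j) (q j) := by
            ext k
            simp only [Finset.mem_filter, Finset.mem_range, Finset.mem_Ico]
            have := hqM j
            omega
          rw [e, Nat.card_Ico]
          have := hu j
          omega
  have hfinsum₀ : (∑ᶠ k, s₀ k) = ∑ j, u j := by
    have hsupp : (Function.support s₀) ⊆ ↑(Finset.range M) := by
      intro k hk
      simp only [Function.mem_support] at hk
      simp only [Finset.coe_range, Set.mem_Iio]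
      by_contra h
      exact hk (hs0 k (by omega))
    rw [finsum_eq_sum_of_support_subset _ hsupp]
    exact hsum
  refine ⟨⟨s₀, ⟨hfin₀, heqn₀⟩, fun s hs => funext (huniq s hs)⟩, ?_⟩
  intro s hs
  have hse := huniq s hs
  constructor
  · intro k
    rw [hse k]
    exact hclosed k
  · have : s = s₀ := funext hse
    rw [this]
    exact hfinsum₀
end
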